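/- Let A = [[A_ff, A_fc],[A_cf, A_cc]] be an invertible matrix on F ⊕ C with A_ff invertible, let P = [[W],[I]] and R = [Z, I], and set δ_P = A_ff·W + A_fc, δ_R = Z·A_ff + A_cf, K = R·A·P. Suppose Rᵀ satisfies the weak approximation property with respect to A·Aᵀ with constant C_R, i.e., for every vector v on F ⊕ C there exists a coarse vector w_c with ‖v − Rᵀ·w_c‖² ≤ (C_R/‖A·Aᵀ‖)·‖Aᵀ·v‖². Set C_Z = sqrt(C_R·(1 + ‖Z‖²)/‖A·Aᵀ‖) and assume C_Z·‖δ_P‖ < 1. Then K is invertible, and ‖K⁻¹·δ_R·A_ff⁻¹‖ ≤ C_Z/(1 − C_Z·‖δ_P‖) and ‖K⁻¹·δ_R‖ ≤ C_Z·‖A_ff‖/(1 − C_Z·‖δ_P‖). -/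

import Mathlib

open Matrix
open scoped Matrix.Norms.L2Operator

/-!
With `S = A_cc - A_cf A_ff⁻¹ A_fc` the Schur complement, `K = S + δ_R A_ff⁻¹ δ_P = S (1 + T δ_P)`
where `T = S⁻¹ δ_R A_ff⁻¹`, so `K⁻¹ δ_R A_ff⁻¹ = (1 + T δ_P)⁻¹ T` and a Neumann series bound
reduces everything to `‖T‖ ≤ C_Z`. Let `Y = S⁻¹ [-A_cf A_ff⁻¹, I]` be the coarse block row of
`A⁻¹` and `G = [-I, Zᵀ]`, so that `Tᵀ = G Yᵀ`, `G Rᵀ = 0` and `Aᵀ Yᵀ u = (0, u)`. For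
`v = Yᵀ u` the WAP provides `w_c` with `‖v - Rᵀ w_c‖ ≤ √(C_R / ‖A Aᵀ‖) ‖u‖`, and
`Tᵀ u = G (v - Rᵀ w_c)` with `‖G‖ ≤ √(1 + ‖Z‖²)`.
-/

/-- The Euclidean (ℓ²) norm of a finitely-supported real vector. -/
noncomputable def euclNorm {ι : Type*} [Fintype ι] (v : ι → ℝ) : ℝ :=
  ‖(WithLp.equiv 2 (ι → ℝ)).symm v‖

section EuclNorm

variable {l m n : Type*} [Fintype l] [Fintype m] [Fintype n]

lemma euclNorm_nonneg (v : n → ℝ) : 0 ≤ euclNorm v := norm_nonneg _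

lemma euclNorm_sq (v : n → ℝ) : euclNorm v ^ 2 = ∑ i, v i ^ 2 := by
  simp [euclNorm, EuclideanSpace.norm_sq_eq]

lemma euclNorm_sumElim_sq (x : m → ℝ) (y : n → ℝ) :
    euclNorm (Sum.elim x y) ^ 2 = euclNorm x ^ 2 + euclNorm y ^ 2 := by
  rw [euclNorm_sq, euclNorm_sq, euclNorm_sq, Fintype.sum_sum_type]
  rfl

lemma euclNorm_mulVec_le [DecidableEq n] (N : Matrix m n ℝ) (x : n → ℝ) :
    euclNorm (N *ᵥ x) ≤ ‖N‖ * euclNorm x :=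
  N.l2_opNorm_mulVec (WithLp.toLp 2 x)

lemma l2_opNorm_le_of_euclNorm_mulVec_le [DecidableEq n] {c : ℝ} (hc : 0 ≤ c) (N : Matrix m n ℝ)
    (h : ∀ x, euclNorm (N *ᵥ x) ≤ c * euclNorm x) : ‖N‖ ≤ c :=
  ContinuousLinearMap.opNorm_le_bound _ hc fun x => h (WithLp.ofLp x)

lemma l2_opNorm_fromRows_le [DecidableEq n] (X : Matrix l n ℝ)
    (Y : Matrix m n ℝ) : ‖fromRows X Y‖ ≤ √(‖X‖ ^ 2 + ‖Y‖ ^ 2) := by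
  refine l2_opNorm_le_of_euclNorm_mulVec_le (Real.sqrt_nonneg _) _ fun x => ?_
  rw [fromRows_mulVec, ← Real.sqrt_sq (euclNorm_nonneg _), euclNorm_sumElim_sq,
    ← Real.sqrt_sq (euclNorm_nonneg x), ← Real.sqrt_mul (by positivity)]
  gcongr
  nlinarith [euclNorm_mulVec_le X x, euclNorm_mulVec_le Y x, euclNorm_nonneg (X *ᵥ x),
    euclNorm_nonneg (Y *ᵥ x), norm_nonneg X, norm_nonneg Y, euclNorm_nonneg x]

lemma l2_opNorm_transpose [DecidableEq m] [DecidableEq n] (N : Matrix m n ℝ) : ‖Nᵀ‖ = ‖N‖ := by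
  rw [← conjTranspose_eq_transpose_of_trivial, l2_opNorm_conjTranspose]

end EuclNorm

lemma l2_opNorm_one_le {𝕜 n : Type*} [RCLike 𝕜] [Fintype n] [DecidableEq n] :
    ‖(1 : Matrix n n 𝕜)‖ ≤ 1 := by
  rw [cstar_norm_def, map_one]
  exact ContinuousLinearMap.norm_id_le

section Neumann

variable {𝕜 m n : Type*} [RCLike 𝕜] [Fintype m] [Fintype n] [DecidableEq m] [DecidableEq n]

lemma isUnit_one_add_of_l2_opNorm_lt_one {X : Matrix n n 𝕜} (hX : ‖X‖ < 1) : IsUnit (1 + X) := by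
  have : CompleteSpace (Matrix n n 𝕜) := FiniteDimensional.complete 𝕜 _
  have h := (Units.oneSub (-X) (by rwa [norm_neg])).isUnit
  rwa [Units.val_oneSub, sub_neg_eq_add] at h

lemma l2_opNorm_inv_one_add_le {X : Matrix n n 𝕜} (hX : ‖X‖ < 1) :
    ‖(1 + X)⁻¹‖ ≤ (1 - ‖X‖)⁻¹ := by
  have hinv : (1 + X)⁻¹ = 1 - X * (1 + X)⁻¹ := by
    have h := mul_nonsing_inv _
      ((isUnit_iff_isUnit_det _).mp (isUnit_one_add_of_l2_opNorm_lt_one hX))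
    rw [Matrix.add_mul, Matrix.one_mul] at h
    exact eq_sub_of_add_eq h
  have h : ‖(1 + X)⁻¹‖ ≤ 1 + ‖X‖ * ‖(1 + X)⁻¹‖ :=
    calc ‖(1 + X)⁻¹‖ = ‖1 - X * (1 + X)⁻¹‖ := by rw [← hinv]
      _ ≤ ‖(1 : Matrix n n 𝕜)‖ + ‖X * (1 + X)⁻¹‖ := norm_sub_le _ _
      _ ≤ 1 + ‖X‖ * ‖(1 + X)⁻¹‖ := add_le_add l2_opNorm_one_le (l2_opNorm_mul _ _)
  rw [← one_div (1 - ‖X‖), le_div_iff₀ (by linarith)]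
  nlinarith

lemma isUnit_add_mul_and_l2_opNorm_inv_mul_le {S : Matrix n n 𝕜} (hS : IsUnit S)
    {E : Matrix n m 𝕜} {δ : Matrix m n 𝕜} {c : ℝ} (hE : ‖S⁻¹ * E‖ ≤ c) (hc : c * ‖δ‖ < 1) :
    IsUnit (S + E * δ) ∧ ‖(S + E * δ)⁻¹ * E‖ ≤ c / (1 - c * ‖δ‖) := by
  set T := S⁻¹ * E
  have hTδ : ‖T * δ‖ ≤ c * ‖δ‖ := (l2_opNorm_mul _ _).trans (by gcongr)
  have hfactor : S + E * δ = S * (1 + T * δ) := by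
    rw [Matrix.mul_add, Matrix.mul_one, ← Matrix.mul_assoc, ← Matrix.mul_assoc,
      mul_nonsing_inv _ ((isUnit_iff_isUnit_det _).mp hS), Matrix.one_mul]
  have hN := isUnit_one_add_of_l2_opNorm_lt_one (hTδ.trans_lt hc)
  refine ⟨hfactor ▸ hS.mul hN, ?_⟩
  rw [hfactor, Matrix.mul_inv_rev, Matrix.mul_assoc]
  calc ‖(1 + T * δ)⁻¹ * T‖ ≤ ‖(1 + T * δ)⁻¹‖ * ‖T‖ := l2_opNorm_mul _ _
    _ ≤ (1 - c * ‖δ‖)⁻¹ * c := by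
      gcongr
      exact (l2_opNorm_inv_one_add_le (hTδ.trans_lt hc)).trans (by gcongr)
    _ = c / (1 - c * ‖δ‖) := by ring

end Neumann

section Blocks

variable {α l m : Type*} [CommRing α] [Fintype l] [Fintype m] [DecidableEq l] [DecidableEq m]
  {A : Matrix l l α} (B : Matrix l m α) (C : Matrix m l α) (D : Matrix m m α)

lemma isUnit_schur_of_isUnit_fromBlocks (hA : IsUnit A) (h : IsUnit (fromBlocks A B C D)) :
    IsUnit (D - C * A⁻¹ * B) := by
  let := hA.invertible
  rwa [isUnit_fromBlocks_iff_of_invertible₁₁, invOf_eq_nonsing_inv] at h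

lemma fromCols_neg_mul_inv_one_mul_fromBlocks (hA : IsUnit A) :
    fromCols (-(C * A⁻¹)) (1 : Matrix m m α) * fromBlocks A B C D =
      fromCols 0 (D - C * A⁻¹ * B) := by
  rw [fromCols_mul_fromBlocks, Matrix.neg_mul, Matrix.mul_assoc,
    nonsing_inv_mul _ ((isUnit_iff_isUnit_det _).mp hA)]
  simp only [Matrix.mul_one, Matrix.one_mul, neg_add_cancel, Matrix.neg_mul, Matrix.mul_assoc,
    neg_add_eq_sub]

lemma fromCols_mul_fromBlocks_mul_fromRows_eq_schur_add (hA : IsUnit A) (Z : Matrix m l α)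
    (W : Matrix l m α) :
    fromCols Z (1 : Matrix m m α) * fromBlocks A B C D * fromRows W (1 : Matrix m m α) =
      (D - C * A⁻¹ * B) + (Z * A + C) * A⁻¹ * (A * W + B) := by
  have hAA : A * A⁻¹ = 1 := mul_nonsing_inv _ ((isUnit_iff_isUnit_det _).mp hA)
  rw [Matrix.mul_assoc, fromBlocks_mul_fromRows, fromCols_mul_fromRows, Matrix.add_mul,
    Matrix.mul_assoc Z, hAA]
  simp only [Matrix.mul_one, Matrix.one_mul, Matrix.mul_add, Matrix.add_mul, ← Matrix.mul_assoc]
  rw [Matrix.mul_assoc C A⁻¹ A, nonsing_inv_mul _ ((isUnit_iff_isUnit_det _).mp hA),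
    Matrix.mul_one]
  abel

end Blocks

lemma le_sqrt_mul_of_sq_le_mul_sq {a b c : ℝ} (ha : 0 ≤ a) (hb : 0 ≤ b) (h : a ^ 2 ≤ c * b ^ 2) :
    a ≤ √c * b := by
  rw [← Real.sqrt_sq ha, ← Real.sqrt_sq hb, ← Real.sqrt_mul' _ (sq_nonneg b)]
  exact Real.sqrt_le_sqrt h

lemma l2_opNorm_mul_le_of_approx {k n n' c p : Type*} [Fintype k] [Fintype n] [Fintype n']
    [Fintype c] [Fintype p] [DecidableEq n] [DecidableEq p] {G : Matrix k n ℝ} {Q : Matrix n c ℝ}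
    {N : Matrix n' n ℝ} {q : ℝ} (hq : 0 ≤ q) (hGQ : G * Q = 0)
    (happrox : ∀ v, ∃ w, euclNorm (v - Q *ᵥ w) ≤ q * euclNorm (N *ᵥ v)) (M : Matrix n p ℝ) :
    ‖G * M‖ ≤ ‖G‖ * q * ‖N * M‖ := by
  refine l2_opNorm_le_of_euclNorm_mulVec_le (by positivity) _ fun x => ?_
  obtain ⟨w, hw⟩ := happrox (M *ᵥ x)
  have hGv : G *ᵥ (M *ᵥ x) = G *ᵥ (M *ᵥ x - Q *ᵥ w) := by
    rw [mulVec_sub, mulVec_mulVec w, hGQ, zero_mulVec, sub_zero]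
  calc euclNorm ((G * M) *ᵥ x) = euclNorm (G *ᵥ (M *ᵥ x - Q *ᵥ w)) := by
        rw [← mulVec_mulVec, hGv]
    _ ≤ ‖G‖ * (q * euclNorm ((N * M) *ᵥ x)) := by
        rw [← mulVec_mulVec]
        exact (euclNorm_mulVec_le _ _).trans (by gcongr)
    _ ≤ ‖G‖ * (q * (‖N * M‖ * euclNorm x)) := by
        gcongr
        exact euclNorm_mulVec_le _ _
    _ = ‖G‖ * q * ‖N * M‖ * euclNorm x := by ring

lemma l2_opNorm_schur_inv_mul_le_of_approx {F C : Type*} [Fintype F] [Fintype C] [DecidableEq F]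
    [DecidableEq C] {Aff : Matrix F F ℝ} (Afc : Matrix F C ℝ) (Acf : Matrix C F ℝ)
    (Acc : Matrix C C ℝ) (Z : Matrix C F ℝ) (hAff : IsUnit Aff)
    (hS : IsUnit (Acc - Acf * Aff⁻¹ * Afc)) {q : ℝ} (hq : 0 ≤ q)
    (happrox : ∀ v, ∃ wc, euclNorm (v - (fromCols Z (1 : Matrix C C ℝ))ᵀ *ᵥ wc) ≤
      q * euclNorm ((fromBlocks Aff Afc Acf Acc)ᵀ *ᵥ v)) :
    ‖(Acc - Acf * Aff⁻¹ * Afc)⁻¹ * ((Z * Aff + Acf) * Aff⁻¹)‖ ≤ √(1 + ‖Z‖ ^ 2) * q := by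
  set S := Acc - Acf * Aff⁻¹ * Afc
  set Y := S⁻¹ * fromCols (-(Acf * Aff⁻¹)) (1 : Matrix C C ℝ)
  set G := (fromRows (-1 : Matrix F F ℝ) Z)ᵀ
  have hT : S⁻¹ * ((Z * Aff + Acf) * Aff⁻¹) = Y * fromRows (-1 : Matrix F F ℝ) Z := by
    rw [Matrix.mul_assoc, fromCols_mul_fromRows, Matrix.add_mul,
      Matrix.mul_assoc Z, mul_nonsing_inv _ ((isUnit_iff_isUnit_det _).mp hAff)]
    simp only [Matrix.mul_one, Matrix.one_mul, Matrix.mul_neg, neg_neg, add_comm]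
  have hYA : (fromBlocks Aff Afc Acf Acc)ᵀ * Yᵀ = (fromCols (0 : Matrix C F ℝ) 1)ᵀ := by
    rw [← transpose_mul, Matrix.mul_assoc, fromCols_neg_mul_inv_one_mul_fromBlocks _ _ _ hAff,
      mul_fromCols, Matrix.mul_zero, nonsing_inv_mul _ ((isUnit_iff_isUnit_det _).mp hS)]
  have hGQ : G * (fromCols Z (1 : Matrix C C ℝ))ᵀ = 0 := by
    rw [← transpose_mul, fromCols_mul_fromRows]
    simp
  have hG : ‖G‖ ≤ √(1 + ‖Z‖ ^ 2) := by
    refine (l2_opNorm_transpose _).trans_le ((l2_opNorm_fromRows_le _ _).trans ?_)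
    gcongr
    rw [norm_neg]
    exact pow_le_one₀ (norm_nonneg _) l2_opNorm_one_le
  have hEc : ‖(fromCols (0 : Matrix C F ℝ) (1 : Matrix C C ℝ))ᵀ‖ ≤ 1 := by
    rw [transpose_fromCols, transpose_zero, transpose_one]
    have h1 : ‖(1 : Matrix C C ℝ)‖ ≤ 1 := l2_opNorm_one_le
    refine (l2_opNorm_fromRows_le _ _).trans (Real.sqrt_le_one.mpr ?_)
    simpa using h1
  calc ‖S⁻¹ * ((Z * Aff + Acf) * Aff⁻¹)‖ = ‖G * Yᵀ‖ := by
        rw [hT, ← l2_opNorm_transpose, transpose_mul]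
    _ ≤ ‖G‖ * q * ‖(fromCols (0 : Matrix C F ℝ) (1 : Matrix C C ℝ))ᵀ‖ :=
        hYA ▸ l2_opNorm_mul_le_of_approx hq hGQ happrox _
    _ ≤ √(1 + ‖Z‖ ^ 2) * q * 1 := by gcongr
    _ = √(1 + ‖Z‖ ^ 2) * q := mul_one _

/-- **Lemma 3.2 (WAP on R).** If `Rᵀ` satisfies the WAP with respect to `A·Aᵀ` with constant
`C_R`, and `C_Z·‖δ_P‖ < 1` with `C_Z = sqrt(C_R(1 + ‖Z‖²)/‖A·Aᵀ‖)`, then `K` is invertible,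
`‖K⁻¹·δ_R·A_ff⁻¹‖ ≤ C_Z/(1 − C_Z‖δ_P‖)` and `‖K⁻¹·δ_R‖ ≤ C_Z‖A_ff‖/(1 − C_Z‖δ_P‖)`. -/
theorem wap_on_R_coarse_bounds
    {F C : Type*} [Fintype F] [Fintype C] [DecidableEq F] [DecidableEq C]
    (Aff : Matrix F F ℝ) (Afc : Matrix F C ℝ) (Acf : Matrix C F ℝ) (Acc : Matrix C C ℝ)
    (W : Matrix F C ℝ) (Z : Matrix C F ℝ)
    (A : Matrix (F ⊕ C) (F ⊕ C) ℝ) (hA : A = fromBlocks Aff Afc Acf Acc)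
    (hAinv : IsUnit A) (hAff : IsUnit Aff)
    (P : Matrix (F ⊕ C) C ℝ) (hP : P = fromRows W 1)
    (R : Matrix C (F ⊕ C) ℝ) (hR : R = fromCols Z 1)
    (K : Matrix C C ℝ) (hK : K = R * A * P)
    (δP : Matrix F C ℝ) (hδP : δP = Aff * W + Afc)
    (δR : Matrix C F ℝ) (hδR : δR = Z * Aff + Acf)
    (CR : ℝ)
    (hWAP : ∀ v : (F ⊕ C) → ℝ, ∃ wc : C → ℝ,
      euclNorm (v - Rᵀ *ᵥ wc) ^ 2 ≤ (CR / ‖A * Aᵀ‖) * euclNorm (Aᵀ *ᵥ v) ^ 2)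
    (CZ : ℝ) (hCZ : CZ = Real.sqrt (CR * (1 + ‖Z‖ ^ 2) / ‖A * Aᵀ‖))
    (hsmall : CZ * ‖δP‖ < 1) :
    IsUnit K ∧
      ‖K⁻¹ * δR * Aff⁻¹‖ ≤ CZ / (1 - CZ * ‖δP‖) ∧
      ‖K⁻¹ * δR‖ ≤ CZ * ‖Aff‖ / (1 - CZ * ‖δP‖) := by
  have happrox : ∀ v, ∃ wc, euclNorm (v - Rᵀ *ᵥ wc) ≤ √(CR / ‖A * Aᵀ‖) * euclNorm (Aᵀ *ᵥ v) :=
    fun v => (hWAP v).imp fun _ h =>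
      le_sqrt_mul_of_sq_le_mul_sq (euclNorm_nonneg _) (euclNorm_nonneg _) h
  have hCZ' : CZ = √(1 + ‖Z‖ ^ 2) * √(CR / ‖A * Aᵀ‖) := by
    rw [hCZ, ← Real.sqrt_mul (by positivity)]
    congr 1
    ring
  subst hA hP hR
  have hS := isUnit_schur_of_isUnit_fromBlocks _ _ _ hAff hAinv
  have hT := hCZ' ▸ l2_opNorm_schur_inv_mul_le_of_approx Afc Acf Acc Z hAff hS
    (Real.sqrt_nonneg _) happrox
  rw [← hδR] at hT
  have hKS : K = Acc - Acf * Aff⁻¹ * Afc + δR * Aff⁻¹ * δP := by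
    rw [hK, hδR, hδP, fromCols_mul_fromBlocks_mul_fromRows_eq_schur_add _ _ _ hAff]
  obtain ⟨hKunit, hbound⟩ := isUnit_add_mul_and_l2_opNorm_inv_mul_le hS hT hsmall
  rw [← hKS] at hKunit hbound
  rw [← Matrix.mul_assoc] at hbound
  refine ⟨hKunit, hbound, ?_⟩
  calc ‖K⁻¹ * δR‖ = ‖K⁻¹ * δR * Aff⁻¹ * Aff‖ := by
        rw [Matrix.mul_assoc _ Aff⁻¹, nonsing_inv_mul _ ((isUnit_iff_isUnit_det _).mp hAff),
          Matrix.mul_one]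
    _ ≤ CZ / (1 - CZ * ‖δP‖) * ‖Aff‖ := (l2_opNorm_mul _ _).trans (by gcongr)
    _ = CZ * ‖Aff‖ / (1 - CZ * ‖δP‖) := by ring
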